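/- arXiv:1505.05304 — 2 statements merged into one kernel-verified Lean document; each statement's English description precedes it below -/
import Mathlib

section
/- Fix ξ ∈ ℝ², ε > 0 and p with 1 < p < 2. Then there exists C > 0 such that for all δ ∈ (0,1], ∫_{B_ε(ξ)} e^{p w_{δ,ξ}(x)} (δ² + |x−ξ|²)^p dx ≤ C δ². -/
open MeasureTheory Real

/-- The Liouville bubble `w_{δ,ξ}(x) = log(8δ² / (δ² + |x−ξ|²)²)`. -/
noncomputable def bubble (δ : ℝ) (ξ : EuclideanSpace ℝ (Fin 2)) (x : EuclideanSpace ℝ (Fin 2)) : ℝ :=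
  Real.log (8 * δ ^ 2 / (δ ^ 2 + ‖x - ξ‖ ^ 2) ^ 2)

/-!
Rescaling `x = ξ + δ y` turns the integrand into `8^p (1 + |y|²)^{-p}`, independently of `δ`,
while the Jacobian contributes `δ²`. Since `2p > 2`, the profile `(1 + |y|²)^{-p}` is integrable on
all of `ℝ²`, so its integral bounds the one over the rescaled ball uniformly in `δ`.
-/

section Rescaling

variable {E : Type*} [NormedAddCommGroup E] [NormedSpace ℝ E] [FiniteDimensional ℝ E]
  [MeasurableSpace E] [BorelSpace E] (μ : Measure E) [μ.IsAddHaarMeasure]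

theorem integral_comp_inv_smul_sub_of_nonneg {F : Type*} [NormedAddCommGroup F] [NormedSpace ℝ F]
    (f : E → F) (ξ : E) {δ : ℝ} (hδ : 0 ≤ δ) :
    ∫ x, f (δ⁻¹ • (x - ξ)) ∂μ = δ ^ Module.finrank ℝ E • ∫ y, f y ∂μ := by
  rw [integral_sub_right_eq_self (fun x => f (δ⁻¹ • x)) ξ,
    Measure.integral_comp_inv_smul_of_nonneg μ f hδ]

theorem setIntegral_comp_inv_smul_sub_le {f : E → ℝ} (hf : Integrable f μ) (hf0 : 0 ≤ f)
    (s : Set E) (ξ : E) {δ : ℝ} (hδ : 0 < δ) :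
    ∫ x in s, f (δ⁻¹ • (x - ξ)) ∂μ ≤ δ ^ Module.finrank ℝ E * ∫ y, f y ∂μ := by
  have hint : Integrable (fun x => f (δ⁻¹ • (x - ξ))) μ :=
    ((integrable_comp_smul_iff μ f (inv_ne_zero hδ.ne')).mpr hf).comp_sub_right ξ
  calc ∫ x in s, f (δ⁻¹ • (x - ξ)) ∂μ ≤ ∫ x, f (δ⁻¹ • (x - ξ)) ∂μ :=
        setIntegral_le_integral hint (Filter.Eventually.of_forall fun x => hf0 (δ⁻¹ • (x - ξ)))
    _ = δ ^ Module.finrank ℝ E * ∫ y, f y ∂μ :=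
        integral_comp_inv_smul_sub_of_nonneg μ f ξ hδ.le

end Rescaling

theorem exp_mul_bubble_mul_rpow {δ : ℝ} (hδ : δ ≠ 0) (ξ x : EuclideanSpace ℝ (Fin 2)) (p : ℝ) :
    Real.exp (p * bubble δ ξ x) * (δ ^ 2 + ‖x - ξ‖ ^ 2) ^ p
      = 8 ^ p * (1 + ‖δ⁻¹ • (x - ξ)‖ ^ 2) ^ (-p) := by
  set a := δ ^ 2 + ‖x - ξ‖ ^ 2
  have ha : 0 < a := by positivity
  have hquot : 0 < 8 * δ ^ 2 / a ^ 2 := by positivity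
  have hrescaled : 1 + ‖δ⁻¹ • (x - ξ)‖ ^ 2 = a / δ ^ 2 := by
    rw [norm_smul, mul_pow, norm_inv, Real.norm_eq_abs, inv_pow, sq_abs]
    field_simp
    rfl
  rw [bubble, mul_comm p, ← Real.rpow_def_of_pos hquot, hrescaled,
    Real.rpow_neg (by positivity), ← Real.inv_rpow (by positivity), inv_div,
    ← Real.mul_rpow hquot.le ha.le, ← Real.mul_rpow (by norm_num) (by positivity)]
  congr 1
  field_simp

theorem bubble_improved_Lp_estimate_general (ξ : EuclideanSpace ℝ (Fin 2)) (ε : ℝ)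
    (p : ℝ) (hp1 : 1 < p) :
    ∃ C : ℝ, 0 < C ∧ ∀ δ : ℝ, 0 < δ → δ ≤ 1 →
      (∫ x in Metric.ball ξ ε,
          Real.exp (p * bubble δ ξ x) * (δ ^ 2 + ‖x - ξ‖ ^ 2) ^ p)
        ≤ C * δ ^ 2 := by
  set profile : EuclideanSpace ℝ (Fin 2) → ℝ := fun y => (1 + ‖y‖ ^ 2) ^ (-p)
  have hprofile : Integrable profile := by
    simpa [profile, neg_div] using integrable_rpow_neg_one_add_norm_sq
      (E := EuclideanSpace ℝ (Fin 2)) (μ := volume) (r := 2 * p)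
      (by rw [finrank_euclideanSpace_fin]; push_cast; linarith)
  have hprofile0 : 0 ≤ profile := fun y => by positivity
  have hI : 0 ≤ ∫ y, profile y := integral_nonneg hprofile0
  refine ⟨8 ^ p * ((∫ y, profile y) + 1), by positivity, fun δ hδ _ => ?_⟩
  calc (∫ x in Metric.ball ξ ε, Real.exp (p * bubble δ ξ x) * (δ ^ 2 + ‖x - ξ‖ ^ 2) ^ p)
      = 8 ^ p * ∫ x in Metric.ball ξ ε, profile (δ⁻¹ • (x - ξ)) := by
        simp_rw [exp_mul_bubble_mul_rpow hδ.ne', integral_const_mul, profile]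
    _ ≤ 8 ^ p * (δ ^ 2 * ∫ y, profile y) := by
        gcongr
        simpa using setIntegral_comp_inv_smul_sub_le volume hprofile hprofile0 _ ξ hδ
    _ ≤ 8 ^ p * ((∫ y, profile y) + 1) * δ ^ 2 := by
        rw [mul_assoc]
        gcongr 8 ^ p * ?_
        nlinarith [sq_nonneg δ]

/-- Fix `ξ ∈ ℝ²`, `ε > 0` and `1 < p < 2`. Then there exists `C > 0` such that for all
`δ ∈ (0,1]`, `∫_{B_ε(ξ)} e^{p w_{δ,ξ}(x)} (δ² + |x−ξ|²)^p dx ≤ C δ²`. -/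
theorem bubble_improved_Lp_estimate (ξ : EuclideanSpace ℝ (Fin 2)) (ε : ℝ) (hε : 0 < ε)
    (p : ℝ) (hp1 : 1 < p) (hp2 : p < 2) :
    ∃ C : ℝ, 0 < C ∧ ∀ δ : ℝ, 0 < δ → δ ≤ 1 →
      (∫ x in Metric.ball ξ ε,
          Real.exp (p * bubble δ ξ x) * (δ ^ 2 + ‖x - ξ‖ ^ 2) ^ p)
        ≤ C * δ ^ 2 :=
  bubble_improved_Lp_estimate_general ξ ε p hp1
end

section
/- Fix ξ ∈ ℝ², ε > 0 and M > 0. Then there exists C > 0 such that the following holds for every δ ∈ (0,1]: for every measurable function g : B_ε(ξ) → ℝ satisfying |g(x)| ≤ M(δ² + |x−ξ|) for all x ∈ B_ε(ξ), one has | ∫_{B_ε(ξ)} e^{w_{δ,ξ}(x) + g(x)} dx − 8π | ≤ C δ. -/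
open MeasureTheory Real

/-!
Since `e^{w_{δ,ξ}} = 8δ²/(δ² + |x-ξ|²)²` is radial, integrating in polar coordinates gives
`∫_{B_ε(ξ)} e^{w_{δ,ξ}} = 8π ε²/(δ² + ε²) = 8π - O(δ²)` and
`∫_{B_ε(ξ)} e^{w_{δ,ξ}} |x-ξ| ≤ 16π δ ∫_0^∞ ds/(1+s²) = 8π² δ`.
The perturbation is controlled by `|e^g - 1| ≤ |g| e^{|g|}`, where `|g| ≤ M(δ² + |x-ξ|)` is
bounded by `M(1+ε)` on the ball, so `e^g` costs at most
`M e^{M(1+ε)} ∫ e^{w_{δ,ξ}} (δ² + |x-ξ|) = O(δ)`.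
-/

open Set Metric

lemma Real.abs_exp_sub_one_le_mul_exp_abs (t : ℝ) : |exp t - 1| ≤ |t| * exp |t| := by
  rcases le_total 0 t with ht | ht
  · have h : 1 - t ≤ exp (-t) := by linarith [add_one_le_exp (-t)]
    have h' : exp (-t) * exp t = 1 := by rw [← exp_add, neg_add_cancel, exp_zero]
    rw [abs_of_nonneg ht, abs_of_nonneg (sub_nonneg.mpr (one_le_exp ht))]
    nlinarith [exp_pos t]
  · rw [abs_of_nonpos ht, abs_of_nonpos (sub_nonpos.mpr (exp_le_one_iff.mpr ht))]
    nlinarith [add_one_le_exp t, one_le_exp (neg_nonneg.mpr ht)]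

lemma abs_setIntegral_mul_exp_sub_setIntegral_le {α : Type*} [MeasurableSpace α] {μ : Measure α}
    {s : Set α} {p g h : α → ℝ} {L : ℝ} (hs : MeasurableSet s) (hp : IntegrableOn p s μ)
    (hph : IntegrableOn (fun x ↦ p x * h x) s μ) (hg : AEStronglyMeasurable g (μ.restrict s))
    (hp0 : ∀ x ∈ s, 0 ≤ p x) (hgh : ∀ x ∈ s, |g x| ≤ h x) (hhL : ∀ x ∈ s, h x ≤ L) :
    |∫ x in s, p x * exp (g x) ∂μ - ∫ x in s, p x ∂μ| ≤ exp L * ∫ x in s, p x * h x ∂μ := by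
  have hexp_le : ∀ x ∈ s, exp |g x| ≤ exp L := fun x hx ↦
    exp_le_exp.mpr ((hgh x hx).trans (hhL x hx))
  have hpg : IntegrableOn (fun x ↦ p x * exp (g x)) s μ := by
    refine hp.mul_bdd (c := exp L) (continuous_exp.comp_aestronglyMeasurable hg) ?_
    filter_upwards [ae_restrict_mem hs] with x hx
    rw [norm_of_nonneg (exp_pos _).le]
    exact (exp_le_exp.mpr (le_abs_self _)).trans (hexp_le x hx)
  rw [← integral_sub hpg hp, ← integral_const_mul]
  refine abs_integral_le_integral_abs.trans
    (setIntegral_mono_on (hpg.sub hp).abs (hph.const_mul _) hs fun x hx ↦ ?_)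
  calc |p x * exp (g x) - p x| = p x * |exp (g x) - 1| := by
        rw [← mul_sub_one, abs_mul, abs_of_nonneg (hp0 x hx)]
    _ ≤ p x * (h x * exp L) := by
        refine mul_le_mul_of_nonneg_left ((Real.abs_exp_sub_one_le_mul_exp_abs _).trans ?_)
          (hp0 x hx)
        exact mul_le_mul (hgh x hx) (hexp_le x hx) (exp_pos _).le
          ((abs_nonneg _).trans (hgh x hx))
    _ = exp L * (p x * h x) := by ring

lemma Continuous.integrableOn_ball {X F : Type*} [PseudoMetricSpace X] [ProperSpace X]
    [MeasurableSpace X] [OpensMeasurableSpace X] {μ : Measure X} [IsLocallyFiniteMeasure μ]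
    [NormedAddCommGroup F] {f : X → F} (hf : Continuous f) (x : X) (r : ℝ) :
    IntegrableOn f (ball x r) μ :=
  (hf.locallyIntegrable.integrableOn_isCompact (isCompact_closedBall x r)).mono_set
    ball_subset_closedBall

section Radial

variable {E F : Type*} [NormedAddCommGroup E] [NormedSpace ℝ E] [MeasurableSpace E]
  [BorelSpace E] [FiniteDimensional ℝ E] [Nontrivial E] [NormedAddCommGroup F] [NormedSpace ℝ F]
  (μ : Measure E) [μ.IsAddHaarMeasure]

lemma setIntegral_ball_fun_norm_sub_addHaar (ξ : E) (ε : ℝ) (f : ℝ → F) :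
    ∫ x in ball ξ ε, f ‖x - ξ‖ ∂μ = Module.finrank ℝ E • μ.real (ball 0 1) •
      ∫ r in Ioo 0 ε, r ^ (Module.finrank ℝ E - 1) • f r := by
  have hball : (ball ξ ε).indicator (fun x ↦ f ‖x - ξ‖) = fun x ↦ (Iio ε).indicator f ‖x - ξ‖ := by
    ext x
    by_cases hx : ‖x - ξ‖ < ε <;> simp [indicator, dist_eq_norm, hx]
  rw [← integral_indicator measurableSet_ball, hball,
    integral_sub_right_eq_self (fun x ↦ (Iio ε).indicator f ‖x‖) ξ, integral_fun_norm_addHaar,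
    ← indicator_smul (Iio ε) (fun r : ℝ ↦ r ^ (Module.finrank ℝ E - 1)) f,
    setIntegral_indicator measurableSet_Iio, Ioi_inter_Iio]

end Radial

lemma EuclideanSpace.setIntegral_ball_fun_norm_sub (ξ : EuclideanSpace ℝ (Fin 2)) (ε : ℝ)
    (f : ℝ → ℝ) : ∫ x in ball ξ ε, f ‖x - ξ‖ = 2 * π * ∫ r in Ioo 0 ε, r * f r := by
  have hvol : volume.real (ball (0 : EuclideanSpace ℝ (Fin 2)) 1) = π := by
    rw [measureReal_def, EuclideanSpace.volume_ball]
    simp [Real.sq_sqrt pi_nonneg, one_add_one_eq_two, pi_nonneg]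
  rw [setIntegral_ball_fun_norm_sub_addHaar, finrank_euclideanSpace_fin, hvol]
  simp [mul_assoc]

noncomputable def bubbleProfile (δ r : ℝ) : ℝ := 8 * δ ^ 2 / (δ ^ 2 + r ^ 2) ^ 2

section BubbleProfile

variable {δ ε : ℝ}

lemma bubbleProfile_pos (hδ : δ ≠ 0) (r : ℝ) : 0 < bubbleProfile δ r := by
  unfold bubbleProfile
  positivity

lemma continuous_bubbleProfile (hδ : δ ≠ 0) : Continuous (bubbleProfile δ) :=
  continuous_const.div (by fun_prop) fun r ↦ by positivity

lemma exp_bubble (hδ : δ ≠ 0) (ξ x : EuclideanSpace ℝ (Fin 2)) :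
    exp (bubble δ ξ x) = bubbleProfile δ ‖x - ξ‖ :=
  exp_log (bubbleProfile_pos hδ _)

lemma integral_Ioo_mul_bubbleProfile (hδ : δ ≠ 0) (hε : 0 ≤ ε) :
    ∫ r in Ioo 0 ε, r * bubbleProfile δ r = 4 * ε ^ 2 / (δ ^ 2 + ε ^ 2) := by
  have hderiv : ∀ r ∈ uIcc 0 ε,
      HasDerivAt (fun r ↦ -(4 * δ ^ 2) / (δ ^ 2 + r ^ 2)) (r * bubbleProfile δ r) r := by
    intro r _
    have h := (((hasDerivAt_pow 2 r).const_add (δ ^ 2)).inv (by positivity)).const_mul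
      (-(4 * δ ^ 2))
    simp only [div_eq_mul_inv]
    refine h.congr_deriv ?_
    simp only [bubbleProfile]
    field_simp
    ring
  rw [← integral_Ioc_eq_integral_Ioo, ← intervalIntegral.integral_of_le hε,
    intervalIntegral.integral_eq_sub_of_hasDerivAt hderiv
      ((continuous_id.mul (continuous_bubbleProfile hδ)).intervalIntegrable 0 ε)]
  field_simp
  ring

lemma integral_Ioo_sq_mul_bubbleProfile_le (hδ : 0 < δ) (hε : 0 ≤ ε) :
    ∫ r in Ioo 0 ε, r * (bubbleProfile δ r * r) ≤ 4 * π * δ := by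
  have hcont : Continuous fun r : ℝ ↦ 8 * δ ^ 2 / (δ ^ 2 + r ^ 2) :=
    continuous_const.div (by fun_prop) fun r ↦ by positivity
  have harctan : ∫ r in Ioo 0 ε, 8 * δ ^ 2 / (δ ^ 2 + r ^ 2) = 8 * δ * arctan (ε / δ) := by
    have hderiv : ∀ r ∈ uIcc 0 ε,
        HasDerivAt (fun r ↦ 8 * δ * arctan (r / δ)) (8 * δ ^ 2 / (δ ^ 2 + r ^ 2)) r := by
      intro r _
      refine (((hasDerivAt_id r).div_const δ).arctan.const_mul (8 * δ)).congr_deriv ?_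
      simp only [id]
      field_simp
    rw [← integral_Ioc_eq_integral_Ioo, ← intervalIntegral.integral_of_le hε,
      intervalIntegral.integral_eq_sub_of_hasDerivAt hderiv (hcont.intervalIntegrable 0 ε)]
    simp
  have hmono : ∫ r in Ioo 0 ε, r * (bubbleProfile δ r * r)
      ≤ ∫ r in Ioo 0 ε, 8 * δ ^ 2 / (δ ^ 2 + r ^ 2) := by
    refine setIntegral_mono_on ?_ (hcont.integrableOn_Icc.mono_set Ioo_subset_Icc_self)
      measurableSet_Ioo fun r _ ↦ ?_
    · exact (continuous_id.mul ((continuous_bubbleProfile hδ.ne').mul continuous_id)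
        ).integrableOn_Icc.mono_set Ioo_subset_Icc_self
    · have hpos : 0 < δ ^ 2 + r ^ 2 := by positivity
      rw [bubbleProfile, show r * (8 * δ ^ 2 / (δ ^ 2 + r ^ 2) ^ 2 * r)
          = 8 * δ ^ 2 / (δ ^ 2 + r ^ 2) * (r ^ 2 / (δ ^ 2 + r ^ 2)) by field_simp]
      exact mul_le_of_le_one_right (by positivity)
        ((div_le_one hpos).mpr (by nlinarith [sq_nonneg δ]))
  calc _ ≤ 8 * δ * arctan (ε / δ) := harctan ▸ hmono
    _ ≤ 8 * δ * (π / 2) := by gcongr; exact (arctan_lt_pi_div_two _).le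
    _ = 4 * π * δ := by ring

end BubbleProfile

section Ball

variable (ξ : EuclideanSpace ℝ (Fin 2)) {δ ε : ℝ}

lemma continuous_bubbleProfile_norm_sub (hδ : δ ≠ 0) :
    Continuous fun x ↦ bubbleProfile δ ‖x - ξ‖ :=
  (continuous_bubbleProfile hδ).comp (continuous_id.sub continuous_const).norm

lemma integral_ball_bubbleProfile (hδ : δ ≠ 0) (hε : 0 ≤ ε) :
    ∫ x in ball ξ ε, bubbleProfile δ ‖x - ξ‖ = 8 * π * ε ^ 2 / (δ ^ 2 + ε ^ 2) := by
  rw [EuclideanSpace.setIntegral_ball_fun_norm_sub, integral_Ioo_mul_bubbleProfile hδ hε]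
  ring

lemma abs_integral_ball_bubbleProfile_sub_le (hδ : 0 < δ) (hδ1 : δ ≤ 1) (hε : 0 < ε) :
    |(∫ x in ball ξ ε, bubbleProfile δ ‖x - ξ‖) - 8 * π| ≤ 8 * π / ε ^ 2 * δ := by
  have hdefect : 8 * π * ε ^ 2 / (δ ^ 2 + ε ^ 2) - 8 * π = -(8 * π * δ ^ 2 / (δ ^ 2 + ε ^ 2)) := by
    field_simp
    ring
  rw [integral_ball_bubbleProfile ξ hδ.ne' hε.le, hdefect, abs_neg, abs_of_nonneg (by positivity)]
  calc 8 * π * δ ^ 2 / (δ ^ 2 + ε ^ 2) ≤ 8 * π * δ ^ 2 / ε ^ 2 := by gcongr; linarith [sq_nonneg δ]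
    _ = 8 * π / ε ^ 2 * δ ^ 2 := by ring
    _ ≤ 8 * π / ε ^ 2 * δ := by gcongr; nlinarith

lemma integral_ball_bubbleProfile_mul_norm_le (hδ : 0 < δ) (hε : 0 ≤ ε) :
    ∫ x in ball ξ ε, bubbleProfile δ ‖x - ξ‖ * ‖x - ξ‖ ≤ 8 * π ^ 2 * δ := by
  rw [EuclideanSpace.setIntegral_ball_fun_norm_sub ξ ε fun r ↦ bubbleProfile δ r * r]
  calc _ ≤ 2 * π * (4 * π * δ) := by
        gcongr
        exact integral_Ioo_sq_mul_bubbleProfile_le hδ hε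
    _ = 8 * π ^ 2 * δ := by ring

lemma integral_ball_bubbleProfile_mul_le (hδ : 0 < δ) (hδ1 : δ ≤ 1) (hε : 0 ≤ ε) :
    ∫ x in ball ξ ε, bubbleProfile δ ‖x - ξ‖ * (δ ^ 2 + ‖x - ξ‖) ≤ (8 * π + 8 * π ^ 2) * δ := by
  have hP := continuous_bubbleProfile_norm_sub ξ hδ.ne'
  have hmass : ∫ x in ball ξ ε, bubbleProfile δ ‖x - ξ‖ ≤ 8 * π := by
    rw [integral_ball_bubbleProfile ξ hδ.ne' hε, mul_div_assoc]
    exact mul_le_of_le_one_right (by positivity)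
      (div_le_one_of_le₀ (by nlinarith [sq_nonneg δ]) (by positivity))
  simp_rw [mul_add]
  rw [integral_add ((hP.integrableOn_ball ξ ε).mul_const _)
      (Continuous.integrableOn_ball (by fun_prop) ξ ε), integral_mul_const]
  calc _ ≤ 8 * π * δ + 8 * π ^ 2 * δ := by
        refine add_le_add ?_ (integral_ball_bubbleProfile_mul_norm_le ξ hδ hε)
        calc (∫ x in ball ξ ε, bubbleProfile δ ‖x - ξ‖) * δ ^ 2 ≤ 8 * π * δ ^ 2 := by gcongr
          _ ≤ 8 * π * δ := by gcongr; nlinarith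
    _ = (8 * π + 8 * π ^ 2) * δ := by ring

end Ball

/-- Fix `ξ ∈ ℝ²`, `ε > 0`, `M > 0`. Then there is `C > 0` such that for every `δ ∈ (0,1]`
and every measurable `g` with `|g(x)| ≤ M(δ² + |x−ξ|)` on `B_ε(ξ)`, one has
`|∫_{B_ε(ξ)} e^{w_{δ,ξ}(x) + g(x)} dx − 8π| ≤ C δ`. -/
theorem bubble_perturbed_mass (ξ : EuclideanSpace ℝ (Fin 2)) (ε : ℝ) (hε : 0 < ε)
    (M : ℝ) (hM : 0 < M) :
    ∃ C : ℝ, 0 < C ∧ ∀ δ : ℝ, 0 < δ → δ ≤ 1 →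
      ∀ g : EuclideanSpace ℝ (Fin 2) → ℝ, Measurable g →
        (∀ x ∈ Metric.ball ξ ε, |g x| ≤ M * (δ ^ 2 + ‖x - ξ‖)) →
        |(∫ x in Metric.ball ξ ε, Real.exp (bubble δ ξ x + g x)) - 8 * Real.pi| ≤ C * δ := by
  refine ⟨M * exp (M * (1 + ε)) * (8 * π + 8 * π ^ 2) + 8 * π / ε ^ 2, by positivity,
    fun δ hδ hδ1 g hg hgM ↦ ?_⟩
  have hP := continuous_bubbleProfile_norm_sub ξ hδ.ne'
  have hweight_le : ∀ x ∈ ball ξ ε, M * (δ ^ 2 + ‖x - ξ‖) ≤ M * (1 + ε) := fun x hx ↦ by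
    have hx : ‖x - ξ‖ < ε := by rwa [mem_ball, dist_eq_norm] at hx
    gcongr
    nlinarith
  have hperturb := abs_setIntegral_mul_exp_sub_setIntegral_le (μ := volume) measurableSet_ball
    (hP.integrableOn_ball ξ ε) (Continuous.integrableOn_ball (by fun_prop) ξ ε)
    hg.aestronglyMeasurable (fun x _ ↦ (bubbleProfile_pos hδ.ne' _).le) hgM hweight_le
  have hweighted : ∫ x in ball ξ ε, bubbleProfile δ ‖x - ξ‖ * (M * (δ ^ 2 + ‖x - ξ‖))
      ≤ M * ((8 * π + 8 * π ^ 2) * δ) := by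
    simp_rw [mul_left_comm _ M, integral_const_mul]
    gcongr
    exact integral_ball_bubbleProfile_mul_le ξ hδ hδ1 hε.le
  simp_rw [exp_add, exp_bubble hδ.ne']
  calc _ ≤ |(∫ x in ball ξ ε, bubbleProfile δ ‖x - ξ‖ * exp (g x))
          - ∫ x in ball ξ ε, bubbleProfile δ ‖x - ξ‖|
        + |(∫ x in ball ξ ε, bubbleProfile δ ‖x - ξ‖) - 8 * π| := abs_sub_le _ _ _
    _ ≤ exp (M * (1 + ε)) * (M * ((8 * π + 8 * π ^ 2) * δ)) + 8 * π / ε ^ 2 * δ := by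
        gcongr
        · exact hperturb.trans (by gcongr)
        · exact abs_integral_ball_bubbleProfile_sub_le ξ hδ hδ1 hε
    _ = _ := by ring
end
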